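/- arXiv:2010.15671 — 2 statements merged into one kernel-verified Lean document; each statement's English description precedes it below -/
import Mathlib

section
/- Let G = ⟨V, E, L, Σ_V, Σ_E⟩ be a finite fuzzy labeled graph with V nonempty. If ℚ is the partition corresponding to the largest bisimulation of G, then ℚ is a stable refinement of ℙ₀. -/
/-- A fuzzy labeled graph `G = ⟨V, E, L, Σ_V, Σ_E⟩`: the fuzzy set of labeled
edges `E : V × Σ_E × V → [0,1]` and the labeling function `L : V → (Σ_V → [0,1])`. -/
structure FuzzyGraph (V SV SE : Type*) where
  edge : V → SE → V → unitInterval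
  lab : V → SV → unitInterval

/-- A nonempty binary relation `Z ⊆ V × V` is a (crisp) bisimulation of `G`. -/
def IsBisimulation {V SV SE : Type*} (G : FuzzyGraph V SV SE) (Z : V → V → Prop) : Prop :=
  (∃ x x', Z x x') ∧
  (∀ x x', Z x x' → G.lab x = G.lab x') ∧
  (∀ x x' y (r : SE), Z x x' → 0 < G.edge x r y →
      ∃ y', Z y y' ∧ G.edge x r y ≤ G.edge x' r y') ∧
  (∀ x x' y' (r : SE), Z x x' → 0 < G.edge x' r y' →
      ∃ y, Z y y' ∧ G.edge x' r y' ≤ G.edge x r y)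

instance : Fact ((0:ℝ) ≤ 1) := ⟨zero_le_one⟩


/-- `sup E(x,r,Y)`, the supremum being taken in the complete lattice `[0,1]`. -/
noncomputable def supE {V SV SE : Type*} (G : FuzzyGraph V SV SE)
    (x : V) (r : SE) (Y : Set V) : unitInterval :=
  ⨆ y ∈ Y, G.edge x r y

/-- A set `X ⊆ V` is stable w.r.t. `⟨Y,r⟩` if `sup E(x,r,Y) = sup E(x',r,Y)`
for all `x, x' ∈ X`. -/
def StableWith {V SV SE : Type*} (G : FuzzyGraph V SV SE)
    (X Y : Set V) (r : SE) : Prop :=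
  ∀ x ∈ X, ∀ x' ∈ X, supE G x r Y = supE G x' r Y

/-- A partition `ℙ` is stable w.r.t. `⟨Y,r⟩` if every block of `ℙ` is. -/
def PartStableWith {V SV SE : Type*} (G : FuzzyGraph V SV SE)
    (P : Set (Set V)) (Y : Set V) (r : SE) : Prop :=
  ∀ X ∈ P, StableWith G X Y r

/-- A partition `ℙ` is stable if it is stable w.r.t. `⟨Y,r⟩`
for all blocks `Y ∈ ℙ` and all edge labels `r`. -/
def PartStable {V SV SE : Type*} (G : FuzzyGraph V SV SE) (P : Set (Set V)) : Prop :=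
  ∀ Y ∈ P, ∀ r : SE, PartStableWith G P Y r

/-- `ℙ` is a refinement of `ℚ` if every block of `ℙ` is contained in some block of `ℚ`. -/
def Refines {V : Type*} (P Q : Set (Set V)) : Prop :=
  ∀ X ∈ P, ∃ Y ∈ Q, X ⊆ Y

/-- The set of equivalence classes of a relation `Z`. -/
def classesOf {V : Type*} (Z : V → V → Prop) : Set (Set V) :=
  {s | ∃ x, s = {x' | Z x x'}}

/-- `ℙ₀`: the partition of `V` corresponding to the equivalence relation
`{(x,x') | L(x) = L(x') and sup E(x,r,V) = sup E(x',r,V) for all r}`. -/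
noncomputable def P0 {V SV SE : Type*} (G : FuzzyGraph V SV SE) : Set (Set V) :=
  classesOf (fun x x' => G.lab x = G.lab x' ∧
    ∀ r : SE, supE G x r Set.univ = supE G x' r Set.univ)


/-!
The largest bisimulation `Z` is an equivalence relation, since the identity, the converse of `Z`
and `Z ∘ Z` are bisimulations and hence contained in `Z`. If `Y` is closed under `Z` and `Z x x'`,
every positive edge from `x` into `Y` is matched by an edge at least as heavy from `x'` into `Y`,
so `sup E(x,r,Y) ≤ sup E(x',r,Y)`, and symmetry gives equality. Taking `Y = V` shows that
`Z`-related vertices are `ℙ₀`-related, and taking `Y` a class of `Z` gives stability.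
-/

def IsLargestBisimulation {V SV SE : Type*} (G : FuzzyGraph V SV SE) (Z : V → V → Prop) :
    Prop :=
  IsBisimulation G Z ∧ ∀ Z' : V → V → Prop, IsBisimulation G Z' → ∀ x x', Z' x x' → Z x x'

theorem refines_classesOf_of_le {V : Type*} {Z R : V → V → Prop}
    (h : ∀ x x', Z x x' → R x x') : Refines (classesOf Z) (classesOf R) := by
  rintro _ ⟨x, rfl⟩
  exact ⟨{x' | R x x'}, ⟨x, rfl⟩, fun x' => h x x'⟩

theorem isBisimulation_eq {V SV SE : Type*} [Nonempty V] (G : FuzzyGraph V SV SE) :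
    IsBisimulation G (· = ·) := by
  obtain ⟨x⟩ := ‹Nonempty V›
  refine ⟨⟨x, x, rfl⟩, ?_, ?_, ?_⟩
  · rintro a _ rfl
    rfl
  · rintro a _ y r rfl -
    exact ⟨y, rfl, le_rfl⟩
  · rintro a _ y r rfl -
    exact ⟨y, rfl, le_rfl⟩

namespace IsBisimulation

variable {V SV SE : Type*} {G : FuzzyGraph V SV SE} {Z Z₁ Z₂ : V → V → Prop}

theorem flip (hZ : IsBisimulation G Z) : IsBisimulation G (flip Z) := by
  obtain ⟨⟨x, x', hxx'⟩, hlab, hfwd, hbwd⟩ := hZ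
  exact ⟨⟨x', x, hxx'⟩, fun a b h => (hlab b a h).symm,
    fun a b y r h => hbwd b a y r h, fun a b y r h => hfwd b a y r h⟩

theorem comp (h₁ : IsBisimulation G Z₁) (h₂ : IsBisimulation G Z₂)
    (hne : ∃ x z, Relation.Comp Z₁ Z₂ x z) : IsBisimulation G (Relation.Comp Z₁ Z₂) := by
  obtain ⟨-, hlab₁, hfwd₁, hbwd₁⟩ := h₁
  obtain ⟨-, hlab₂, hfwd₂, hbwd₂⟩ := h₂
  refine ⟨hne, ?_, ?_, ?_⟩
  · rintro a c ⟨b, hab, hbc⟩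
    exact (hlab₁ a b hab).trans (hlab₂ b c hbc)
  · rintro a c y r ⟨b, hab, hbc⟩ hy
    obtain ⟨y₁, hyy₁, hle₁⟩ := hfwd₁ a b y r hab hy
    obtain ⟨y₂, hy₁y₂, hle₂⟩ := hfwd₂ b c y₁ r hbc (hy.trans_le hle₁)
    exact ⟨y₂, ⟨y₁, hyy₁, hy₁y₂⟩, hle₁.trans hle₂⟩
  · rintro a c y r ⟨b, hab, hbc⟩ hy
    obtain ⟨y₁, hy₁y, hle₁⟩ := hbwd₂ b c y r hbc hy
    obtain ⟨y₂, hy₂y₁, hle₂⟩ := hbwd₁ a b y₁ r hab (hy.trans_le hle₁)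
    exact ⟨y₂, ⟨y₁, hy₂y₁, hy₁y⟩, hle₁.trans hle₂⟩

theorem lab_eq (hZ : IsBisimulation G Z) {x x' : V} (hxx' : Z x x') : G.lab x = G.lab x' :=
  hZ.2.1 x x' hxx'

theorem supE_le (hZ : IsBisimulation G Z) {Y : Set V} (hY : ∀ y ∈ Y, ∀ y', Z y y' → y' ∈ Y)
    {x x' : V} (hxx' : Z x x') (r : SE) : supE G x r Y ≤ supE G x' r Y := by
  refine iSup₂_le fun y hy => ?_
  by_cases hpos : 0 < G.edge x r y
  · obtain ⟨y', hyy', hle⟩ := hZ.2.2.1 x x' y r hxx' hpos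
    exact hle.trans (le_iSup₂ (f := fun y _ => G.edge x' r y) y' (hY y hy y' hyy'))
  · exact (not_lt.mp hpos).trans unitInterval.nonneg'

theorem supE_eq (hZ : IsBisimulation G Z) (hsymm : ∀ {x x'}, Z x x' → Z x' x) {Y : Set V}
    (hY : ∀ y ∈ Y, ∀ y', Z y y' → y' ∈ Y) {x x' : V} (hxx' : Z x x') (r : SE) :
    supE G x r Y = supE G x' r Y :=
  le_antisymm (hZ.supE_le hY hxx' r) (hZ.supE_le hY (hsymm hxx') r)

theorem partStable_classesOf (hZ : IsBisimulation G Z) (hequiv : Equivalence Z) :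
    PartStable G (classesOf Z) := by
  rintro _ ⟨z, rfl⟩ r _ ⟨w, rfl⟩ x hx x' hx'
  exact hZ.supE_eq hequiv.symm (fun y hy y' hyy' => hequiv.trans hy hyy')
    (hequiv.trans (hequiv.symm hx) hx') r

end IsBisimulation

namespace IsLargestBisimulation

variable {V SV SE : Type*} {G : FuzzyGraph V SV SE} {Z : V → V → Prop}

theorem equivalence [Nonempty V] (hZ : IsLargestBisimulation G Z) : Equivalence Z where
  refl x := hZ.2 _ (isBisimulation_eq G) x x rfl
  symm {x x'} h := hZ.2 _ hZ.1.flip x' x h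
  trans {x y z} hxy hyz := hZ.2 _ (hZ.1.comp hZ.1 ⟨x, z, y, hxy, hyz⟩) x z ⟨y, hxy, hyz⟩

end IsLargestBisimulation

theorem partition_of_largest_bisim_is_stable_refinement_general
    {V SV SE : Type*} [Nonempty V]
    (G : FuzzyGraph V SV SE) (Z : V → V → Prop)
    (hZ : IsBisimulation G Z ∧
      ∀ Z' : V → V → Prop, IsBisimulation G Z' → ∀ x x', Z' x x' → Z x x')
    (Q : Set (Set V)) (hQeq : Q = classesOf Z) :
    Refines Q (P0 G) ∧ PartStable G Q := by
  have hequiv : Equivalence Z := IsLargestBisimulation.equivalence hZ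
  have hsupE_univ : ∀ x x', Z x x' → ∀ r : SE, supE G x r Set.univ = supE G x' r Set.univ :=
    fun _ _ hxx' => hZ.1.supE_eq hequiv.symm (fun _ _ _ _ => trivial) hxx'
  subst hQeq
  exact ⟨refines_classesOf_of_le fun x x' hxx' => ⟨hZ.1.lab_eq hxx', hsupE_univ x x' hxx'⟩,
    hZ.1.partStable_classesOf hequiv⟩

/-- If `ℚ` is the partition corresponding to the largest bisimulation of a finite
fuzzy graph `G` (with nonempty vertex set), then `ℚ` is a stable refinement of `ℙ₀`. -/
theorem partition_of_largest_bisim_is_stable_refinement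
    {V SV SE : Type*} [Fintype V] [Fintype SV] [Fintype SE] [Nonempty V]
    (G : FuzzyGraph V SV SE) (Z : V → V → Prop)
    (hZ : IsBisimulation G Z ∧
      ∀ Z' : V → V → Prop, IsBisimulation G Z' → ∀ x x', Z' x x' → Z x x')
    (Q : Set (Set V)) (hQeq : Q = classesOf Z) :
    Refines Q (P0 G) ∧ PartStable G Q :=
  partition_of_largest_bisim_is_stable_refinement_general G Z hZ Q hQeq
end

section
/- Let G = ⟨V, E, L, Σ_V, Σ_E⟩ be a finite fuzzy labeled graph with V nonempty, and let ℚ be a partition of V. Then ℚ is the partition corresponding to the largest s-bisimulation of G if and only if ℚ is the coarsest s-stable refinement of ℙ₁, i.e., ℚ is an s-stable refinement of ℙ₁ and every s-stable refinement of ℙ₁ is a refinement of ℚ. -/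
/-- `x↑_r = {y ∈ V | E(x,r,y) > 0}`. -/
def upSet {V SV SE : Type*} (G : FuzzyGraph V SV SE) (x : V) (r : SE) : Set V :=
  {y | 0 < G.edge x r y}

/-- A nonempty binary relation `Z ⊆ V × V` is an s-bisimulation (crisp bisimulation
with counting successors) of `G`. -/
def IsSBisimulation {V SV SE : Type*} (G : FuzzyGraph V SV SE) (Z : V → V → Prop) : Prop :=
  (∃ x x', Z x x') ∧
  (∀ x x', Z x x' → G.lab x = G.lab x') ∧
  (∀ x x' (r : SE), Z x x' →
    ∃ h : upSet G x r → upSet G x' r, Function.Bijective h ∧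
      ∀ y : upSet G x r, Z ↑y ↑(h y) ∧ G.edge x r ↑y = G.edge x' r ↑(h y))

/-- `x↑_{r(d)}Y = {y ∈ Y | E(x,r,y) = d}`. -/
def rSlice {V SV SE : Type*} (G : FuzzyGraph V SV SE)
    (x : V) (r : SE) (d : unitInterval) (Y : Set V) : Set V :=
  {y ∈ Y | G.edge x r y = d}

/-- A set `X ⊆ V` is s-stable w.r.t. `⟨Y,r⟩` if `|x↑_{r(d)}Y| = |x'↑_{r(d)}Y|`
for all `x, x' ∈ X` and `d ∈ (0,1]`. -/
def SStableWith {V SV SE : Type*} (G : FuzzyGraph V SV SE)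
    (X Y : Set V) (r : SE) : Prop :=
  ∀ x ∈ X, ∀ x' ∈ X, ∀ d : unitInterval, 0 < d →
    Cardinal.mk ↥(rSlice G x r d Y) = Cardinal.mk ↥(rSlice G x' r d Y)

/-- A partition `ℙ` is s-stable w.r.t. `⟨Y,r⟩` if every block of `ℙ` is. -/
def PartSStableWith {V SV SE : Type*} (G : FuzzyGraph V SV SE)
    (P : Set (Set V)) (Y : Set V) (r : SE) : Prop :=
  ∀ X ∈ P, SStableWith G X Y r

/-- A partition `ℙ` is s-stable if it is s-stable w.r.t. `⟨Y,r⟩`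
for all blocks `Y ∈ ℙ` and all edge labels `r`. -/
def PartSStable {V SV SE : Type*} (G : FuzzyGraph V SV SE) (P : Set (Set V)) : Prop :=
  ∀ Y ∈ P, ∀ r : SE, PartSStableWith G P Y r

/-- `ℙ₁`: the partition of `V` corresponding to the equivalence relation
`{(x,x') | L(x) = L(x') and |x↑_{r(d)}V| = |x'↑_{r(d)}V| for all r and d ∈ (0,1]}`. -/
def P1 {V SV SE : Type*} (G : FuzzyGraph V SV SE) : Set (Set V) :=
  classesOf (fun x x' => G.lab x = G.lab x' ∧
    ∀ (r : SE) (d : unitInterval), 0 < d →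
      Cardinal.mk ↥(rSlice G x r d Set.univ) = Cardinal.mk ↥(rSlice G x' r d Set.univ))

/-!
A partition induces the relation "lies in the same block", and this relation is an
s-bisimulation exactly when the partition refines `ℙ₁` and is s-stable: stability says that two
vertices of one block have, for every target block and weight, equally many successors, and these
counts can be glued into the bijections demanded of an s-bisimulation. Conversely the bijections of
an s-bisimulation that is an equivalence preserve its classes, hence the counts. The largest
s-bisimulation is an equivalence (identity, converse and composite of s-bisimulations are
s-bisimulations), so its partition is s-stable, refines `ℙ₁`, and lies above every s-stable
refinement of `ℙ₁`.
-/

section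

variable {V SV SE : Type*} (G : FuzzyGraph V SV SE)

def IsLargestSBisimulation (Z : V → V → Prop) : Prop :=
  IsSBisimulation G Z ∧
    ∀ Z' : V → V → Prop, IsSBisimulation G Z' → ∀ x x', Z' x x' → Z x x'

variable {G}

namespace IsSBisimulation

variable {Z Z' : V → V → Prop}

theorem nonempty (hZ : IsSBisimulation G Z) : Nonempty V :=
  let ⟨x, _⟩ := hZ.1
  ⟨x⟩

theorem exists_equiv (hZ : IsSBisimulation G Z) {x x' : V} (h : Z x x') (r : SE) :
    ∃ e : upSet G x r ≃ upSet G x' r,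
      ∀ y : upSet G x r, Z y (e y) ∧ G.edge x r y = G.edge x' r (e y) :=
  let ⟨h, hbij, hh⟩ := hZ.2.2 x x' r h
  ⟨.ofBijective h hbij, hh⟩

variable (G) in
theorem eq [Nonempty V] : IsSBisimulation G (· = ·) :=
  ⟨⟨Classical.arbitrary V, _, rfl⟩, fun _ _ h => h ▸ rfl,
    fun _ _ _ h => h ▸ ⟨id, Function.bijective_id, fun _ => ⟨rfl, rfl⟩⟩⟩

theorem flip (hZ : IsSBisimulation G Z) : IsSBisimulation G (flip Z) := by
  obtain ⟨x, x', h⟩ := hZ.1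
  refine ⟨⟨x', x, h⟩, fun a b h => (hZ.2.1 b a h).symm, fun a b r h => ?_⟩
  obtain ⟨e, he⟩ := hZ.exists_equiv h r
  refine ⟨e.symm, e.symm.bijective, fun y => ?_⟩
  have hy := he (e.symm y)
  rw [e.apply_symm_apply] at hy
  exact ⟨hy.1, hy.2.symm⟩

theorem comp (hZ : IsSBisimulation G Z) (hZ' : IsSBisimulation G Z')
    (hne : ∃ x x', Relation.Comp Z Z' x x') : IsSBisimulation G (Relation.Comp Z Z') := by
  refine ⟨hne, fun a b ⟨c, hac, hcb⟩ => (hZ.2.1 a c hac).trans (hZ'.2.1 c b hcb),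
    fun a b r ⟨c, hac, hcb⟩ => ?_⟩
  obtain ⟨e, he⟩ := hZ.exists_equiv hac r
  obtain ⟨e', he'⟩ := hZ'.exists_equiv hcb r
  exact ⟨e.trans e', (e.trans e').bijective,
    fun y => ⟨⟨e y, (he y).1, (he' (e y)).1⟩, (he y).2.trans (he' (e y)).2⟩⟩

end IsSBisimulation

theorem IsLargestSBisimulation.equivalence {Z : V → V → Prop}
    (hZ : IsLargestSBisimulation G Z) : Equivalence Z :=
  have := hZ.1.nonempty
  { refl := fun x => hZ.2 _ (.eq G) x x rfl
    symm := fun h => hZ.2 _ hZ.1.flip _ _ h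
    trans := fun h h' => hZ.2 _ (hZ.1.comp hZ.1 ⟨_, _, _, h, h'⟩) _ _ ⟨_, h, h'⟩ }

theorem mem_upSet_of_mem_rSlice {x y : V} {r : SE} {d : unitInterval} {Y : Set V} (hd : 0 < d)
    (hy : y ∈ rSlice G x r d Y) : y ∈ upSet G x r :=
  lt_of_lt_of_eq hd hy.2.symm

theorem IsSBisimulation.mk_rSlice_eq {Z : V → V → Prop} (hZ : IsSBisimulation G Z)
    {Y : Set V} (hY : ∀ a b, Z a b → (a ∈ Y ↔ b ∈ Y)) {x x' : V} (h : Z x x') (r : SE)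
    {d : unitInterval} (hd : 0 < d) :
    Cardinal.mk (rSlice G x r d Y) = Cardinal.mk (rSlice G x' r d Y) := by
  obtain ⟨e, he⟩ := hZ.exists_equiv h r
  have hslice : ∀ y : upSet G x r,
      (y : V) ∈ rSlice G x r d Y ↔ (e y : V) ∈ rSlice G x' r d Y := fun y =>
    and_congr (hY _ _ (he y).1) (by rw [(he y).2])
  exact Cardinal.mk_congr <|
    (Equiv.subtypeSubtypeEquivSubtype (mem_upSet_of_mem_rSlice hd)).symm.trans <|
      (e.subtypeEquiv hslice).trans (Equiv.subtypeSubtypeEquivSubtype (mem_upSet_of_mem_rSlice hd))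

namespace IsSBisimulation

variable {s : Setoid V}

theorem refines_P1 (hs : IsSBisimulation G s) : Refines s.classes (P1 G) := by
  rintro _ ⟨y, rfl⟩
  refine ⟨_, ⟨y, rfl⟩, fun x hxy => ?_⟩
  exact ⟨hs.2.1 y x (s.symm hxy), fun r _ hd =>
    hs.mk_rSlice_eq (fun _ _ _ => Iff.rfl) (s.symm hxy) r hd⟩

theorem partSStable_classes (hs : IsSBisimulation G s) : PartSStable G s.classes := by
  rintro _ ⟨z, rfl⟩ r _ ⟨y, rfl⟩ x hx x' hx' _ hd
  exact hs.mk_rSlice_eq (fun _ _ hab => ⟨s.trans (s.symm hab), s.trans hab⟩)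
    (s.trans hx (s.symm hx')) r hd

end IsSBisimulation

variable (G) in
def blockWeight (s : Setoid V) (x : V) (r : SE) (y : upSet G x r) :
    Quotient s × {d : unitInterval // 0 < d} :=
  (⟦y⟧, ⟨G.edge x r y, y.2⟩)

theorem mk_fiber_blockWeight (s : Setoid V) (x : V) (r : SE) (z : V) {d : unitInterval}
    (hd : 0 < d) :
    Cardinal.mk {y // blockWeight G s x r y = (⟦z⟧, ⟨d, hd⟩)} =
      Cardinal.mk (rSlice G x r d {v | s v z}) := by
  refine Cardinal.mk_congr <|
    (Equiv.subtypeEquivRight fun y => ?_).trans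
      (Equiv.subtypeSubtypeEquivSubtype (mem_upSet_of_mem_rSlice hd))
  exact Prod.ext_iff.trans (and_congr Quotient.eq Subtype.mk_eq_mk)

theorem isSBisimulation_of_partSStable [Nonempty V] (s : Setoid V)
    (hlab : ∀ x x', s x x' → G.lab x = G.lab x') (hst : PartSStable G s.classes) :
    IsSBisimulation G s := by
  -- the fibres of `blockWeight` are the slices, so stability lets us match them fibrewise
  refine ⟨⟨_, _, s.refl (Classical.arbitrary V)⟩, hlab, fun x x' r hxx' => ?_⟩
  have hfiber : ∀ c, Nonempty ({y // blockWeight G s x r y = c} ≃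
      {y // blockWeight G s x' r y = c}) := by
    rintro ⟨q, d, hd⟩
    induction q using Quotient.inductionOn with | h z => ?_
    rw [← Cardinal.eq, mk_fiber_blockWeight, mk_fiber_blockWeight]
    exact hst _ (s.mem_classes z) r _ (s.mem_classes x') x hxx' x' (s.refl x') d hd
  let e := Equiv.ofFiberEquiv fun c => (hfiber c).some
  refine ⟨e, e.bijective, fun y => ?_⟩
  have hy := Equiv.ofFiberEquiv_map (fun c => (hfiber c).some) y
  exact ⟨s.symm (Quotient.exact (congrArg Prod.fst hy)),
    (congrArg (Subtype.val ∘ Prod.snd) hy).symm⟩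

theorem lab_eq_of_refines_P1 {s : Setoid V} (h : Refines s.classes (P1 G)) {x x' : V}
    (hxx' : s x x') : G.lab x = G.lab x' := by
  obtain ⟨_, ⟨y, rfl⟩, hsub⟩ := h _ (s.mem_classes x')
  exact (hsub hxx').1.symm.trans (hsub (s.refl x')).1

theorem refines_classes_of_le {s t : Setoid V} (h : s ≤ t) : Refines s.classes t.classes := by
  rintro _ ⟨y, rfl⟩
  exact ⟨_, t.mem_classes y, fun _ hx => h hx⟩

theorem IsLargestSBisimulation.refines_classes {s : Setoid V} (hs : IsLargestSBisimulation G s)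
    {P : Set (Set V)} (hP : Setoid.IsPartition P) (hP1 : Refines P (P1 G))
    (hst : PartSStable G P) : Refines P s.classes := by
  have := hs.1.nonempty
  rw [← Setoid.classes_mkClasses P hP] at hP1 hst ⊢
  have hbis := isSBisimulation_of_partSStable _ (fun _ _ => lab_eq_of_refines_P1 hP1) hst
  exact refines_classes_of_le fun _ _ h => hs.2 _ hbis _ _ h

theorem classesOf_eq_classes (s : Setoid V) : classesOf s = s.classes := by
  ext X
  refine exists_congr fun y => ?_
  rw [show {x | s y x} = {x | s x y} from Set.ext fun _ => ⟨s.symm, s.symm⟩]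

theorem subset_of_refines_of_refines {P Q : Set (Set V)} (hP : Setoid.IsPartition P)
    (hPQ : Refines P Q) (hQP : Refines Q P) : P ⊆ Q := by
  intro X hX
  obtain ⟨Y, hY, hXY⟩ := hPQ X hX
  obtain ⟨X', hX', hYX'⟩ := hQP Y hY
  obtain ⟨x, hx⟩ := Set.nonempty_iff_ne_empty.mpr fun h => hP.1 (h ▸ hX)
  have hXX' : X = X' := Setoid.eq_of_mem_eqv_class hP.2 hX hx hX' (hYX' (hXY hx))
  rwa [hXY.antisymm (hXX' ▸ hYX')]

theorem refines_antisymm {P Q : Set (Set V)} (hP : Setoid.IsPartition P)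
    (hQ : Setoid.IsPartition Q) (hPQ : Refines P Q) (hQP : Refines Q P) : P = Q :=
  (subset_of_refines_of_refines hP hPQ hQP).antisymm (subset_of_refines_of_refines hQ hQP hPQ)

end

theorem partition_of_largest_sBisim_iff_coarsest_sStable_refinement_general
    {V SV SE : Type*}
    (G : FuzzyGraph V SV SE) (Z : V → V → Prop)
    (hZ : IsSBisimulation G Z ∧
      ∀ Z' : V → V → Prop, IsSBisimulation G Z' → ∀ x x', Z' x x' → Z x x')
    (Q : Set (Set V)) (hQ : Setoid.IsPartition Q) :
    Q = classesOf Z ↔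
      (Refines Q (P1 G) ∧ PartSStable G Q ∧
        ∀ P : Set (Set V), Setoid.IsPartition P → Refines P (P1 G) → PartSStable G P →
          Refines P Q) := by
  let S : Setoid V := ⟨Z, IsLargestSBisimulation.equivalence hZ⟩
  have hS : IsLargestSBisimulation G S := hZ
  rw [show classesOf Z = S.classes from classesOf_eq_classes S]
  constructor
  · rintro rfl
    exact ⟨hS.1.refines_P1, hS.1.partSStable_classes, fun _ => hS.refines_classes⟩
  · rintro ⟨hQ1, hQst, hcoarsest⟩
    exact refines_antisymm hQ S.isPartition_classes (hS.refines_classes hQ hQ1 hQst)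
      (hcoarsest _ S.isPartition_classes hS.1.refines_P1 hS.1.partSStable_classes)

/-- For a finite fuzzy graph `G` with nonempty vertex set: a partition `ℚ` of `V`
is the partition corresponding to the largest s-bisimulation of `G` iff it is the
coarsest s-stable refinement of `ℙ₁`. -/
theorem partition_of_largest_sBisim_iff_coarsest_sStable_refinement
    {V SV SE : Type*} [Fintype V] [Fintype SV] [Fintype SE] [Nonempty V]
    (G : FuzzyGraph V SV SE) (Z : V → V → Prop)
    (hZ : IsSBisimulation G Z ∧
      ∀ Z' : V → V → Prop, IsSBisimulation G Z' → ∀ x x', Z' x x' → Z x x')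
    (Q : Set (Set V)) (hQ : Setoid.IsPartition Q) :
    Q = classesOf Z ↔
      (Refines Q (P1 G) ∧ PartSStable G Q ∧
        ∀ P : Set (Set V), Setoid.IsPartition P → Refines P (P1 G) → PartSStable G P →
          Refines P Q) :=
  partition_of_largest_sBisim_iff_coarsest_sStable_refinement_general G Z hZ Q hQ
end
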